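/- arXiv:1609.05263 — 2 statements merged into one kernel-verified Lean document; each statement's English description precedes it below -/
import Mathlib

section
/- Define tH_KSs^{2+3/2}(α,β,γ; t; q₁,p₁,q₂,p₂) = tH_{III(D7)}(α;t;q₁,p₁) + tH_{III(D7)}(β;t;q₂,p₂) + 2p₂q₁(p₁q₁+γ) − q₁, and tH_KSs^{2+4/3}(α,β; t; q₁,p₁,q₂,p₂) = tH_{III(D7)}(α;t;q₁,p₁) + tH_{III(D7)}(β;t;q₂,p₂) − t(2p₁p₂+p₁+p₂), where tH_{III(D7)}(a;t;q,p) = p²q² + aqp + tp + q. Then under the substitution q₁ = ε t̃ p̃₁, p₁ = −q̃₁/(ε t̃), q₂ = q̃₂, p₂ = p̃₂, t = −ε t̃, the limit lim_{ε→0} [ t·H_KSs^{2+3/2}(α, β, γ − ε⁻¹; t; q₁,p₁,q₂,p₂) + p̃₁q̃₁ ] exists and equals t̃·H_KSs^{2+4/3}(1−α, β; t̃; q̃₁,p̃₁,q̃₂,p̃₂). -/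
/-- `t·H_{III(D7)}(a;t;q,p) = p²q² + aqp + tp + q`. -/
def tHIIID7 (a t q p : ℂ) : ℂ := p ^ 2 * q ^ 2 + a * q * p + t * p + q

/-- `t·H_KSs^{2+3/2}(α,β,γ;t;q₁,p₁,q₂,p₂)`. -/
def tHKSs_2_32 (α β γ t q1 p1 q2 p2 : ℂ) : ℂ :=
  tHIIID7 α t q1 p1 + tHIIID7 β t q2 p2 + 2 * p2 * q1 * (p1 * q1 + γ) - q1

/-- `t·H_KSs^{2+4/3}(α,β;t;q₁,p₁,q₂,p₂)`. -/
def tHKSs_2_43 (α β t q1 p1 q2 p2 : ℂ) : ℂ :=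
  tHIIID7 α t q1 p1 + tHIIID7 β t q2 p2 - t * (2 * p1 * p2 + p1 + p2)

/- Under the substitution no pole in `ε` survives: the shift `γ ↦ γ - ε⁻¹` contributes
`2p₂q₁·(-ε⁻¹) = -2t̃p̃₁p̃₂`, which is the coupling term of the `2+4/3` system, and the added
`p̃₁q̃₁` turns `αq₁p₁ = -αp̃₁q̃₁` into `(1 - α)p̃₁q̃₁`. The result is exactly affine in `ε`,
so its limit is its value at `ε = 0`. -/

open Filter Topology

theorem tHKSs_2_32_degeneration_eq (α β γ tt q1 p1 q2 p2 ε : ℂ) (hε : ε ≠ 0) (htt : tt ≠ 0) :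
    tHKSs_2_32 α β (γ - ε⁻¹) (-(ε * tt)) (ε * tt * p1) (-(q1 / (ε * tt))) q2 p2 + p1 * q1 =
      tHKSs_2_43 (1 - α) β tt q1 p1 q2 p2 + ε * (tt * (2 * p1 * p2 * (γ - p1 * q1) - p2)) := by
  simp only [tHKSs_2_32, tHKSs_2_43, tHIIID7]
  field_simp
  ring

/-- Degeneration `2+3/2 → 2+4/3`: under `q₁ = εt̃p̃₁`, `p₁ = −q̃₁/(εt̃)`, `q₂ = q̃₂`,
`p₂ = p̃₂`, `t = −εt̃`, `γ ↦ γ − ε⁻¹`, the quantity `t·H_KSs^{2+3/2} + p̃₁q̃₁` tends, as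
`ε → 0`, to `t̃·H_KSs^{2+4/3}(1−α, β; t̃; q̃₁,p̃₁,q̃₂,p̃₂)`. -/
theorem degeneration_2_32_to_2_43 (α β γ tt q1 p1 q2 p2 : ℂ) (htt : tt ≠ 0) :
    Filter.Tendsto
      (fun ε : ℂ =>
        tHKSs_2_32 α β (γ - ε⁻¹) (-(ε * tt)) (ε * tt * p1) (-(q1 / (ε * tt))) q2 p2
          + p1 * q1)
      (nhdsWithin 0 {ε : ℂ | ε ≠ 0})
      (nhds (tHKSs_2_43 (1 - α) β tt q1 p1 q2 p2)) := by
  set L := tHKSs_2_43 (1 - α) β tt q1 p1 q2 p2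
  set D := tt * (2 * p1 * p2 * (γ - p1 * q1) - p2)
  have affine : Tendsto (fun ε : ℂ => L + ε * D) (𝓝 0) (𝓝 L) := by
    simpa using (tendsto_const_nhds (x := L)).add ((tendsto_id (x := 𝓝 (0 : ℂ))).mul_const D)
  refine (affine.mono_left nhdsWithin_le_nhds).congr' ?_
  filter_upwards [self_mem_nhdsWithin] with ε hε
  exact (tHKSs_2_32_degeneration_eq α β γ tt q1 p1 q2 p2 ε hε htt).symm
end

section
/- With H₁ and H₂ as in the degenerate Garnier system of type 5/2+1+1, namely H₁ = p₁² − (q₁²+t₁)p₁ + θ₁q₁ + p₁p₂ + K/(t₁−t₂) and H₂ = p₂² − (q₂²+t₂)p₂ + θ₂q₂ + p₁p₂ + K/(t₂−t₁), where K = (p₁(q₁−q₂) − θ₁)(p₂(q₂−q₁) − θ₂), the canonical Poisson bracket vanishes identically: {H₁, H₂} = 0, where {F,G} = Σᵢ (∂F/∂qᵢ ∂G/∂pᵢ − ∂F/∂pᵢ ∂G/∂qᵢ). -/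
/-- Partial derivative of `F : ℂ⁴ → ℂ` in the `i`-th coordinate. -/
noncomputable def pderiv4 (F : (Fin 4 → ℂ) → ℂ) (i : Fin 4) (v : Fin 4 → ℂ) : ℂ :=
  deriv (fun s => F (Function.update v i s)) (v i)

/-- Canonical Poisson bracket on `ℂ⁴` with coordinates `(q₁, p₁, q₂, p₂)`
(`q₁ = v 0`, `p₁ = v 1`, `q₂ = v 2`, `p₂ = v 3`):
`{F,G} = Σᵢ (∂F/∂qᵢ ∂G/∂pᵢ − ∂F/∂pᵢ ∂G/∂qᵢ)`. -/
noncomputable def poissonBracket (F G : (Fin 4 → ℂ) → ℂ) (v : Fin 4 → ℂ) : ℂ :=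
  pderiv4 F 0 v * pderiv4 G 1 v - pderiv4 F 1 v * pderiv4 G 0 v
    + pderiv4 F 2 v * pderiv4 G 3 v - pderiv4 F 3 v * pderiv4 G 2 v

/-! The partial derivatives of both Hamiltonians are explicit, so the bracket becomes a rational
identity in `t₁ - t₂`. Writing `c = 1/(t₁ - t₂)`, `H₁` and `H₂` contain `cK` and `-cK`, so there
is no `c²` term. Since `K` depends on `q₁, q₂` only through `q₁ - q₂`, we have
`∂K/∂q₂ = -∂K/∂q₁`, and the terms `-t₁p₁`, `-t₂p₂` contribute `c (t₁ - t₂) ∂K/∂q₁ = ∂K/∂q₁`;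
this cancels the `c`-free part `{h₁, p₁p₂} + {p₁p₂, h₂}`, where `hᵢ = pᵢ² - (qᵢ² + tᵢ)pᵢ + θᵢqᵢ`.
The remaining, `t`-independent, coefficient of `c` vanishes identically. -/

namespace Garnier52

variable (θ1 θ2 t1 t2 : ℂ)

def A (v : Fin 4 → ℂ) : ℂ := v 1 * (v 0 - v 2) - θ1

def B (v : Fin 4 → ℂ) : ℂ := v 3 * (v 2 - v 0) - θ2

def K (v : Fin 4 → ℂ) : ℂ := A θ1 v * B θ2 v

noncomputable def H1 (v : Fin 4 → ℂ) : ℂ :=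
  v 1 ^ 2 - (v 0 ^ 2 + t1) * v 1 + θ1 * v 0 + v 1 * v 3 + K θ1 θ2 v / (t1 - t2)

noncomputable def H2 (v : Fin 4 → ℂ) : ℂ :=
  v 3 ^ 2 - (v 2 ^ 2 + t2) * v 3 + θ2 * v 2 + v 1 * v 3 + K θ1 θ2 v / (t2 - t1)

theorem pderiv4_H1 (v : Fin 4 → ℂ) :
    pderiv4 (H1 θ1 θ2 t1 t2) 0 v =
        θ1 - 2 * v 0 * v 1 + (v 1 * B θ2 v - v 3 * A θ1 v) / (t1 - t2) ∧
      pderiv4 (H1 θ1 θ2 t1 t2) 1 v =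
        2 * v 1 - (v 0 ^ 2 + t1) + v 3 + (v 0 - v 2) * B θ2 v / (t1 - t2) ∧
      pderiv4 (H1 θ1 θ2 t1 t2) 2 v = -(v 1 * B θ2 v - v 3 * A θ1 v) / (t1 - t2) ∧
      pderiv4 (H1 θ1 θ2 t1 t2) 3 v = v 1 + (v 2 - v 0) * A θ1 v / (t1 - t2) := by
  refine ⟨?_, ?_, ?_, ?_⟩ <;>
  · simp only [pderiv4, H1, K, A, B, Function.update_apply, Fin.reduceEq, if_true, if_false]
    simp (disch := fun_prop) only [deriv_fun_add, deriv_fun_sub, deriv_fun_mul, deriv_div_const,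
      deriv_fun_pow, deriv_const', deriv_id'', deriv_const_sub_id,
      deriv_const_mul_id]
    ring

theorem pderiv4_H2 (v : Fin 4 → ℂ) :
    pderiv4 (H2 θ1 θ2 t1 t2) 0 v = (v 1 * B θ2 v - v 3 * A θ1 v) / (t2 - t1) ∧
      pderiv4 (H2 θ1 θ2 t1 t2) 1 v = v 3 + (v 0 - v 2) * B θ2 v / (t2 - t1) ∧
      pderiv4 (H2 θ1 θ2 t1 t2) 2 v =
        θ2 - 2 * v 2 * v 3 - (v 1 * B θ2 v - v 3 * A θ1 v) / (t2 - t1) ∧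
      pderiv4 (H2 θ1 θ2 t1 t2) 3 v =
        2 * v 3 - (v 2 ^ 2 + t2) + v 1 + (v 2 - v 0) * A θ1 v / (t2 - t1) := by
  refine ⟨?_, ?_, ?_, ?_⟩ <;>
  · simp only [pderiv4, H2, K, A, B, Function.update_apply, Fin.reduceEq, if_true, if_false]
    simp (disch := fun_prop) only [deriv_fun_add, deriv_fun_sub, deriv_fun_mul, deriv_div_const,
      deriv_fun_pow, deriv_const', deriv_id'', deriv_const_sub_id,
      deriv_const_mul_id]
    ring

theorem poissonBracket_H1_H2 (h : t1 ≠ t2) (v : Fin 4 → ℂ) :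
    poissonBracket (H1 θ1 θ2 t1 t2) (H2 θ1 θ2 t1 t2) v = 0 := by
  obtain ⟨h10, h11, h12, h13⟩ := pderiv4_H1 θ1 θ2 t1 t2 v
  obtain ⟨h20, h21, h22, h23⟩ := pderiv4_H2 θ1 θ2 t1 t2 v
  have ht : t1 - t2 ≠ 0 := sub_ne_zero.2 h
  rw [poissonBracket, h10, h11, h12, h13, h20, h21, h22, h23, ← neg_sub t1 t2]
  simp only [A, B]
  field_simp
  ring

end Garnier52

/-- The two Hamiltonians of the degenerate Garnier system of type `5/2+1+1`,
`H₁ = p₁² − (q₁²+t₁)p₁ + θ₁q₁ + p₁p₂ + K/(t₁−t₂)` and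
`H₂ = p₂² − (q₂²+t₂)p₂ + θ₂q₂ + p₁p₂ + K/(t₂−t₁)`, with
`K = (p₁(q₁−q₂)−θ₁)(p₂(q₂−q₁)−θ₂)`, Poisson-commute: `{H₁, H₂} = 0`. -/
theorem garnier_52_11_involution (θ1 θ2 t1 t2 : ℂ) (h : t1 ≠ t2) :
    let K : (Fin 4 → ℂ) → ℂ := fun v =>
      (v 1 * (v 0 - v 2) - θ1) * (v 3 * (v 2 - v 0) - θ2)
    let H1 : (Fin 4 → ℂ) → ℂ := fun v =>
      v 1 ^ 2 - (v 0 ^ 2 + t1) * v 1 + θ1 * v 0 + v 1 * v 3 + K v / (t1 - t2)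
    let H2 : (Fin 4 → ℂ) → ℂ := fun v =>
      v 3 ^ 2 - (v 2 ^ 2 + t2) * v 3 + θ2 * v 2 + v 1 * v 3 + K v / (t2 - t1)
    ∀ v : Fin 4 → ℂ, poissonBracket H1 H2 v = 0 :=
  Garnier52.poissonBracket_H1_H2 θ1 θ2 t1 t2 h
end
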